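/- arXiv:2502.21269 — 2 statements merged into one kernel-verified Lean document; each statement's English description precedes it below -/
import Mathlib

section
/- Consider the pure-noise empirical risk R_n(θ) = (1/2n) Σ_{i=1}^n (ε_i - f(x_i;θ))², where ε_i ~ N(0,τ²) are independent of the class F_Θ = {f(·;θ): θ ∈ Θ}, and let the Gaussian complexity be G(F_Θ; n) := E sup_{θ∈Θ} (1/n)⟨g, f(X;θ)⟩, with g ~ N(0, I_n) independent of everything. Then, whenever the functions f(X;θ) have uniformly bounded empirical norm, E inf_{θ∈Θ} R_n(θ) ≥ (τ² - 2τ·n·G(F_Θ;n)/n)/2. -/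
open MeasureTheory ProbabilityTheory

noncomputable def stdGaussian : Measure ℝ := gaussianReal 0 1

open Real Set Filter
open scoped NNReal ENNReal

lemma tend_top : Tendsto (fun x : ℝ => x * Real.exp (-(1/2) * x ^ 2)) atTop (nhds 0) := by
  have h : Tendsto (fun x : ℝ => x * Real.exp (-x)) atTop (nhds 0) := by
    simpa using Real.tendsto_pow_mul_exp_neg_atTop_nhds_zero 1
  apply squeeze_zero' ?_ ?_ h
  · filter_upwards [eventually_ge_atTop (0:ℝ)] with x hx
    positivity
  · filter_upwards [eventually_ge_atTop (2:ℝ)] with x hx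
    have hx0 : (0:ℝ) ≤ x := by linarith
    have : -(1/2) * x ^ 2 ≤ -x := by nlinarith
    exact mul_le_mul_of_nonneg_left (Real.exp_le_exp.2 this) hx0

lemma deriv_phi (x : ℝ) :
    HasDerivAt (fun y : ℝ => -y * Real.exp (-(1/2) * y ^ 2))
      ((x ^ 2 - 1) * Real.exp (-(1/2) * x ^ 2)) x := by
  have h1 : HasDerivAt (fun y : ℝ => -(1/2) * y ^ 2) (-x) x := by
    simpa using ((hasDerivAt_pow 2 x).const_mul (-(1/2) : ℝ))
  have h2 : HasDerivAt (fun y : ℝ => Real.exp (-(1/2) * y ^ 2))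
      (Real.exp (-(1/2) * x ^ 2) * (-x)) x := (Real.hasDerivAt_exp _).comp x h1
  have h3 := ((hasDerivAt_id x).neg).mul h2
  simp only [Pi.mul_def, Pi.neg_apply, id] at h3
  refine h3.congr_deriv ?_
  ring

lemma int_f' : Integrable (fun x : ℝ => (x ^ 2 - 1) * Real.exp (-(1/2) * x ^ 2)) := by
  have h1 : Integrable (fun x : ℝ => x ^ 2 * Real.exp (-(1/2) * x ^ 2)) := by
    have := integrable_rpow_mul_exp_neg_mul_sq (b := 1/2) (by norm_num) (s := 2) (by norm_num)
    simpa [Real.rpow_natCast] using this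
  have h2 : Integrable (fun x : ℝ => Real.exp (-(1/2) * x ^ 2)) :=
    integrable_exp_neg_mul_sq (by norm_num)
  simpa [sub_mul, Pi.sub_def] using h1.sub h2

lemma tend_bot : Tendsto (fun x : ℝ => -x * Real.exp (-(1/2) * x ^ 2)) atBot (nhds 0) := by
  have h := tend_top.comp tendsto_neg_atBot_atTop
  refine h.congr fun x => ?_
  simp only [Function.comp]
  ring_nf

lemma key_int : ∫ x : ℝ, (x ^ 2 - 1) * Real.exp (-(1/2) * x ^ 2) = 0 := by
  set φ : ℝ → ℝ := fun y => -y * Real.exp (-(1/2) * y ^ 2) with hφ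
  have hIoi : ∫ x in Ioi (0:ℝ), (x ^ 2 - 1) * Real.exp (-(1/2) * x ^ 2) = 0 - φ 0 := by
    refine integral_Ioi_of_hasDerivAt_of_tendsto ?_ (fun x _ => deriv_phi x)
      int_f'.integrableOn ?_
    · exact ((deriv_phi 0).continuousAt).continuousWithinAt
    · have := tend_top.neg
      simpa [hφ] using this
  have hIic : ∫ x in Iic (0:ℝ), (x ^ 2 - 1) * Real.exp (-(1/2) * x ^ 2) = φ 0 - 0 := by
    refine integral_Iic_of_hasDerivAt_of_tendsto ?_ (fun x _ => deriv_phi x)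
      int_f'.integrableOn ?_
    · exact ((deriv_phi 0).continuousAt).continuousWithinAt
    · exact tend_bot
  have := intervalIntegral.integral_Iic_add_Ioi (f := fun x : ℝ => (x ^ 2 - 1) * Real.exp (-(1/2) * x ^ 2))
    (b := 0) int_f'.integrableOn int_f'.integrableOn
  rw [← this, hIoi, hIic]
  simp [hφ]

lemma sq_moment_volume : ∫ x : ℝ, x ^ 2 * Real.exp (-(1/2) * x ^ 2) = Real.sqrt (2 * Real.pi) := by
  have h2 : Integrable (fun x : ℝ => Real.exp (-(1/2) * x ^ 2)) :=
    integrable_exp_neg_mul_sq (by norm_num)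
  have h1 : Integrable (fun x : ℝ => x ^ 2 * Real.exp (-(1/2) * x ^ 2)) := by
    have := integrable_rpow_mul_exp_neg_mul_sq (b := 1/2) (by norm_num) (s := 2) (by norm_num)
    simpa [Real.rpow_natCast] using this
  have hg : ∫ x : ℝ, Real.exp (-(1/2) * x ^ 2) = Real.sqrt (2 * Real.pi) := by
    have := integral_gaussian (1/2)
    rw [this]
    norm_num [Real.sqrt_eq_iff_eq_sq, div_div_eq_mul_div, mul_comm]
  have key := key_int
  have : ∫ x : ℝ, (x ^ 2 - 1) * Real.exp (-(1/2) * x ^ 2)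
      = (∫ x : ℝ, x ^ 2 * Real.exp (-(1/2) * x ^ 2)) - ∫ x : ℝ, Real.exp (-(1/2) * x ^ 2) := by
    rw [← integral_sub h1 h2]
    congr 1; ext x; ring
  rw [this] at key
  linarith [hg ▸ key]


lemma stdGaussian_eq : _root_.stdGaussian
    = volume.withDensity (fun x => ((gaussianPDFReal 0 1 x).toNNReal : ℝ≥0∞)) := by
  rw [_root_.stdGaussian, gaussianReal_of_var_ne_zero 0 one_ne_zero]
  rfl

lemma pdf_meas : Measurable (fun x => (gaussianPDFReal 0 1 x).toNNReal) :=
  (measurable_gaussianPDFReal 0 1).real_toNNReal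

lemma pdf_eq (x : ℝ) : gaussianPDFReal 0 1 x
    = (Real.sqrt (2 * Real.pi))⁻¹ * Real.exp (-(1/2) * x ^ 2) := by
  simp only [gaussianPDFReal, NNReal.coe_one, mul_one, sub_zero]
  congr 1
  ring

lemma smul_eq (c x : ℝ) :
    (gaussianPDFReal 0 1 x).toNNReal • c = (Real.sqrt (2 * Real.pi))⁻¹ * (c * Real.exp (-(1/2) * x ^ 2)) := by
  rw [NNReal.smul_def, smul_eq_mul, Real.coe_toNNReal _ (gaussianPDFReal_nonneg 0 1 x), pdf_eq]
  ring

lemma sq_int_stdGaussian : Integrable (fun x : ℝ => x ^ 2) stdGaussian := by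
  rw [stdGaussian_eq, integrable_withDensity_iff_integrable_smul pdf_meas]
  have h1 : Integrable (fun x : ℝ => x ^ 2 * Real.exp (-(1/2) * x ^ 2)) := by
    have := integrable_rpow_mul_exp_neg_mul_sq (b := 1/2) (by norm_num) (s := 2) (by norm_num)
    simpa [Real.rpow_natCast] using this
  have := h1.const_mul (Real.sqrt (2 * Real.pi))⁻¹
  refine this.congr ?_
  refine ae_of_all _ fun x => ?_
  exact (smul_eq _ _).symm

lemma sq_moment_stdGaussian : ∫ x, x ^ 2 ∂stdGaussian = 1 := by
  rw [stdGaussian_eq, integral_withDensity_eq_integral_smul pdf_meas]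
  have : ∫ x : ℝ, (gaussianPDFReal 0 1 x).toNNReal • x ^ 2
      = ∫ x : ℝ, (Real.sqrt (2 * Real.pi))⁻¹ * (x ^ 2 * Real.exp (-(1/2) * x ^ 2)) := by
    congr 1; ext x; exact smul_eq _ _
  rw [this, integral_const_mul, sq_moment_volume, inv_mul_cancel₀]
  positivity

lemma stdGaussian_map_eval (n : ℕ) (i : Fin n) :
    (Measure.pi fun _ : Fin n => _root_.stdGaussian).map (fun x => x i) = _root_.stdGaussian := by
  have : IsProbabilityMeasure stdGaussian := by
    rw [_root_.stdGaussian]; infer_instance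
  refine Measure.ext fun s hs => ?_
  rw [Measure.map_apply (measurable_pi_apply i) hs]
  have hpre : (fun x : Fin n → ℝ => x i) ⁻¹' s
      = Set.pi Set.univ (Function.update (fun _ : Fin n => (Set.univ : Set ℝ)) i s) := by
    ext x
    simp only [Set.mem_preimage, Set.mem_pi, Set.mem_univ, true_implies]
    constructor
    · intro hx j
      rcases eq_or_ne j i with rfl | hj
      · simpa using hx
      · simp [Function.update_of_ne hj]
    · intro hx
      simpa using hx i
  rw [hpre, Measure.pi_pi]
  rw [Finset.prod_eq_single i (fun j _ hj => by simp [Function.update_of_ne hj]) (by simp)]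
  simp

lemma pi_sq_int (n : ℕ) (i : Fin n) :
    Integrable (fun x : Fin n → ℝ => (x i) ^ 2) (Measure.pi fun _ : Fin n => stdGaussian) := by
  have h := sq_int_stdGaussian
  rw [← stdGaussian_map_eval n i] at h
  exact (integrable_map_measure
    (h.1.mono_measure le_rfl) (measurable_pi_apply i).aemeasurable).mp h

lemma pi_sum_sq_int (n : ℕ) :
    Integrable (fun x : Fin n → ℝ => ∑ i, (x i) ^ 2) (Measure.pi fun _ : Fin n => stdGaussian) :=
  integrable_finset_sum _ fun i _ => pi_sq_int n i

lemma pi_sum_sq_moment (n : ℕ) :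
    ∫ x, (∑ i, (x i) ^ 2) ∂(Measure.pi fun _ : Fin n => stdGaussian) = n := by
  rw [integral_finset_sum _ fun i _ => pi_sq_int n i]
  have : ∀ i : Fin n, ∫ x, (x i) ^ 2 ∂(Measure.pi fun _ : Fin n => stdGaussian) = 1 := by
    intro i
    have h : ∫ y, y ^ 2 ∂((Measure.pi fun _ : Fin n => stdGaussian).map (fun x => x i))
        = ∫ x, (x i) ^ 2 ∂(Measure.pi fun _ : Fin n => stdGaussian) :=
      integral_map (measurable_pi_apply i).aemeasurable
        ((measurable_id.pow_const 2).aestronglyMeasurable)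
    rw [stdGaussian_map_eval] at h
    rw [← h, sq_moment_stdGaussian]
  simp [this]


/-- interpolating pure Gaussian noise at level `τ` is impossible unless the
Gaussian complexity is of order `τ`: with `ε = τ g`, `g ~ N(0,I_n)`, and a function class
`F` with uniformly bounded empirical norm,
`E inf_θ (1/2n)‖ε - F θ‖² ≥ τ²/2 - τ · G(F;n)` where
`G(F;n) = E sup_θ (1/n)⟨g, F θ⟩` is the Gaussian complexity. -/
theorem stmt_3 {Ω : Type*} [MeasureSpace Ω] [IsProbabilityMeasure (ℙ : Measure Ω)]
    {Θ : Type*} [Nonempty Θ] (n : ℕ) (hn : 0 < n) (τ B : ℝ) (hτ : 0 ≤ τ)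
    (g : Ω → Fin n → ℝ)
    (hg : Measure.map g ℙ = Measure.pi fun _ => stdGaussian)
    (F : Θ → Fin n → ℝ)
    (hB : ∀ θ, ∑ i, (F θ i) ^ 2 ≤ B)
    (hint_sup : Integrable (fun ω => ⨆ θ, (1 / (n : ℝ)) * ∑ i, g ω i * F θ i))
    (hint_inf : Integrable
      (fun ω => ⨅ θ, (1 / (2 * (n : ℝ))) * ∑ i, (τ * g ω i - F θ i) ^ 2)) :
    (∫ ω, ⨅ θ, (1 / (2 * (n : ℝ))) * ∑ i, (τ * g ω i - F θ i) ^ 2)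
      ≥ τ ^ 2 / 2 - τ * ∫ ω, ⨆ θ, (1 / (n : ℝ)) * ∑ i, g ω i * F θ i := by
  have hprob : IsProbabilityMeasure stdGaussian := by rw [_root_.stdGaussian]; infer_instance
  have hnR : (0:ℝ) < n := by exact_mod_cast hn
  -- g is a.e.-measurable
  have hae : AEMeasurable g ℙ := by
    by_contra h
    rw [Measure.map_of_not_aemeasurable h] at hg
    have h1 : (Measure.pi fun _ : Fin n => stdGaussian) Set.univ = 1 := measure_univ
    rw [← hg] at h1
    simp at h1
  have hsm : AEStronglyMeasurable (fun x : Fin n → ℝ => ∑ i, (x i) ^ 2) (Measure.map g ℙ) :=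
    (Finset.measurable_sum _ fun i _ => (measurable_pi_apply i).pow_const 2).aestronglyMeasurable
  -- integrability and value of ∑ gᵢ²
  have Qint : Integrable (fun ω => ∑ i, (g ω i) ^ 2) ℙ := by
    have h := pi_sum_sq_int n
    rw [← hg] at h
    exact (integrable_map_measure hsm hae).mp h
  have Qval : ∫ ω, ∑ i, (g ω i) ^ 2 ∂ℙ = n := by
    have h := (integral_map hae hsm).symm
    rw [hg, pi_sum_sq_moment] at h
    exact h
  -- pointwise lower bound
  set S : Ω → ℝ := fun ω => ⨆ θ, (1 / (n : ℝ)) * ∑ i, g ω i * F θ i with hS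
  set L : Ω → ℝ := fun ω => τ ^ 2 / (2 * n) * ∑ i, (g ω i) ^ 2 - τ * S ω with hL
  have hBdd : ∀ ω, BddAbove (Set.range fun θ => (1 / (n : ℝ)) * ∑ i, g ω i * F θ i) := by
    intro ω
    refine ⟨(1 / (n : ℝ)) * Real.sqrt ((∑ i, (g ω i) ^ 2) * B), ?_⟩
    rintro _ ⟨θ, rfl⟩
    have hcs := Finset.sum_mul_sq_le_sq_mul_sq Finset.univ (fun i => g ω i) (fun i => F θ i)
    have h1 : (∑ i, g ω i * F θ i) ^ 2 ≤ (∑ i, (g ω i) ^ 2) * B := by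
      refine hcs.trans ?_
      have := hB θ
      have hgnn : (0:ℝ) ≤ ∑ i, (g ω i) ^ 2 := Finset.sum_nonneg fun i _ => sq_nonneg _
      nlinarith
    have h2 : ∑ i, g ω i * F θ i ≤ Real.sqrt ((∑ i, (g ω i) ^ 2) * B) := by
      calc ∑ i, g ω i * F θ i ≤ |∑ i, g ω i * F θ i| := le_abs_self _
        _ = Real.sqrt ((∑ i, g ω i * F θ i) ^ 2) := (Real.sqrt_sq_eq_abs _).symm
        _ ≤ _ := Real.sqrt_le_sqrt h1
    exact mul_le_mul_of_nonneg_left h2 (by positivity)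
  have hpt : ∀ ω, L ω ≤ ⨅ θ, (1 / (2 * (n : ℝ))) * ∑ i, (τ * g ω i - F θ i) ^ 2 := by
    intro ω
    refine le_ciInf fun θ => ?_
    have hsup : (1 / (n : ℝ)) * ∑ i, g ω i * F θ i ≤ S ω := le_ciSup (hBdd ω) θ
    have hexp : (1 / (2 * (n : ℝ))) * ∑ i, (τ * g ω i - F θ i) ^ 2
        ≥ τ ^ 2 / (2 * n) * ∑ i, (g ω i) ^ 2
          - τ * ((1 / (n : ℝ)) * ∑ i, g ω i * F θ i) := by
      have hexpand : ∑ i, (τ * g ω i - F θ i) ^ 2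
          = τ ^ 2 * ∑ i, (g ω i) ^ 2 - 2 * τ * ∑ i, g ω i * F θ i + ∑ i, (F θ i) ^ 2 := by
        rw [Finset.mul_sum, Finset.mul_sum, ← Finset.sum_sub_distrib, ← Finset.sum_add_distrib]
        exact Finset.sum_congr rfl fun i _ => by ring
      have hFnn : (0:ℝ) ≤ ∑ i, (F θ i) ^ 2 := Finset.sum_nonneg fun i _ => sq_nonneg _
      rw [ge_iff_le]
      rw [hexpand]
      have h2n : (0:ℝ) < 2 * n := by positivity
      rw [div_eq_mul_inv, one_div]
      have : τ ^ 2 * (2 * (n:ℝ))⁻¹ * ∑ i, (g ω i) ^ 2 - τ * (((n:ℝ))⁻¹ * ∑ i, g ω i * F θ i)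
          = (2 * (n:ℝ))⁻¹ * (τ ^ 2 * ∑ i, (g ω i) ^ 2 - 2 * τ * ∑ i, g ω i * F θ i) := by
        field_simp
      rw [one_div, this]
      have hle : τ ^ 2 * ∑ i, (g ω i) ^ 2 - 2 * τ * ∑ i, g ω i * F θ i
          ≤ τ ^ 2 * ∑ i, (g ω i) ^ 2 - 2 * τ * ∑ i, g ω i * F θ i + ∑ i, (F θ i) ^ 2 := by
        linarith
      exact mul_le_mul_of_nonneg_left hle (by positivity)
    have : τ * ((1 / (n : ℝ)) * ∑ i, g ω i * F θ i) ≥ τ * S ω → True := fun _ => trivial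
    have hτS : τ * ((1 / (n : ℝ)) * ∑ i, g ω i * F θ i) ≤ τ * S ω :=
      mul_le_mul_of_nonneg_left hsup hτ
    rw [hL]
    dsimp only
    linarith [hexp]
  -- integrate
  have Lint : Integrable L ℙ := (Qint.const_mul _).sub (hint_sup.const_mul τ)
  have hmono := integral_mono Lint hint_inf hpt
  have hLval : ∫ ω, L ω ∂ℙ = τ ^ 2 / 2 - τ * ∫ ω, S ω ∂ℙ := by
    rw [hL]
    rw [integral_sub (Qint.const_mul _) (hint_sup.const_mul τ)]
    rw [integral_const_mul, integral_const_mul, Qval]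
    have : τ ^ 2 / (2 * n) * n = τ ^ 2 / 2 := by
      field_simp
    rw [this]
  rw [hLval] at hmono
  exact hmono
end

section
/- (Lipschitz continuity of population gradients in W) Under the assumptions that ‖h'‖_∞, ‖h'‖_Lip ≤ CL² and ‖∇φ̂‖_∞, ‖∇φ̂‖_Lip ≤ CL², for any (a,W), (a,W̃) with ‖a‖₁/m ≤ ā and all w_i, w̃_i unit vectors: ‖∇_{w_ℓ}R(a,W̃) - ∇_{w_ℓ}R(a,W)‖ ≤ C' L² (|a_ℓ|/m)(1 + ā) max_{j≤m} ‖w̃_j - w_j‖, where R is the population risk of the two-layer network. -/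
/-!
The gradient difference splits into a field term and an interaction sum. The field term
`w ↦ U ∇φ̂(Uᵀ w)` is `C L²`-Lipschitz because `U`, having orthonormal columns, is an isometry
and `Uᵀ` a contraction. In the interaction sum, the overlap `w_ℓᵀ w_j` of unit vectors moves by
at most `2δ` and stays in `[-1, 1]`, where `h'` is bounded and Lipschitz, so the `j`-th summand
`h'(w_ℓᵀ w_j) w_j` moves by at most `3 C L² δ`; the weights `|a_j| / m` then sum to at most `ā`.
-/

open Finset Set Matrix
open scoped InnerProductSpace

/-- The `kk`-th component of `∇_{w_ℓ}R(a,W)` for the population risk of the two-layer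
network: `∇_{w_ℓ}R = (a_ℓ/m)[-U∇φ̂(Uᵀw_ℓ) + (1/m)Σⱼ aⱼ h'(w_ℓᵀwⱼ) wⱼ]`. -/
noncomputable def gradPopW (d m k : ℕ) (h' : ℝ → ℝ) (gφh : (Fin k → ℝ) → Fin k → ℝ)
    (U : Fin d → Fin k → ℝ) (a : Fin m → ℝ) (W : Fin m → Fin d → ℝ)
    (ℓ : Fin m) (kk : Fin d) : ℝ :=
  (a ℓ / (m : ℝ)) *
    (-(∑ j, U kk j * gφh (fun j' => ∑ kk', U kk' j' * W ℓ kk') j)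
      + (1 / (m : ℝ)) * ∑ j, a j * h' (∑ kk', W ℓ kk' * W j kk') * W j kk)

section InnerProductSpace

variable {E : Type*} [NormedAddCommGroup E] [InnerProductSpace ℝ E]

lemma norm_smul_sub_smul_le {F : Type*} [SeminormedAddCommGroup F] [NormedSpace ℝ F]
    (c c' : ℝ) (y y' : F) :
    ‖c' • y' - c • y‖ ≤ |c' - c| * ‖y'‖ + |c| * ‖y' - y‖ :=
  calc ‖c' • y' - c • y‖ = ‖(c' - c) • y' + c • (y' - y)‖ := by congr 1; module
    _ ≤ |c' - c| * ‖y'‖ + |c| * ‖y' - y‖ := by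
      simpa only [norm_smul, Real.norm_eq_abs] using norm_add_le ((c' - c) • y') (c • (y' - y))

lemma abs_real_inner_sub_inner_le {x x' y y' : E} (hx : ‖x‖ = 1) (hy' : ‖y'‖ = 1) :
    |⟪x', y'⟫_ℝ - ⟪x, y⟫_ℝ| ≤ ‖x' - x‖ + ‖y' - y‖ := by
  have hsplit : ⟪x', y'⟫_ℝ - ⟪x, y⟫_ℝ = ⟪x' - x, y'⟫_ℝ + ⟪x, y' - y⟫_ℝ := by
    rw [inner_sub_left, inner_sub_right]; ring
  calc |⟪x', y'⟫_ℝ - ⟪x, y⟫_ℝ| ≤ |⟪x' - x, y'⟫_ℝ| + |⟪x, y' - y⟫_ℝ| := hsplit ▸ abs_add_le _ _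
    _ ≤ ‖x' - x‖ * ‖y'‖ + ‖x‖ * ‖y' - y‖ :=
      add_le_add (abs_real_inner_le_norm _ _) (abs_real_inner_le_norm _ _)
    _ = ‖x' - x‖ + ‖y' - y‖ := by rw [hx, hy', mul_one, one_mul]

variable {h' : ℝ → ℝ} {K δ : ℝ}

lemma norm_apply_inner_smul_sub_le
    (hbound : ∀ q ∈ Icc (-1 : ℝ) 1, |h' q| ≤ K)
    (hlip : ∀ q ∈ Icc (-1 : ℝ) 1, ∀ q' ∈ Icc (-1 : ℝ) 1, |h' q - h' q'| ≤ K * |q - q'|)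
    {x x' y y' : E} (hx : ‖x‖ = 1) (hx' : ‖x'‖ = 1) (hy : ‖y‖ = 1) (hy' : ‖y'‖ = 1)
    (hxδ : ‖x' - x‖ ≤ δ) (hyδ : ‖y' - y‖ ≤ δ) :
    ‖h' ⟪x', y'⟫_ℝ • y' - h' ⟪x, y⟫_ℝ • y‖ ≤ 3 * K * δ := by
  have hmem := real_inner_mem_Icc_of_norm_eq_one hx hy
  have hK : 0 ≤ K := (abs_nonneg _).trans (hbound _ hmem)
  have hq : |⟪x', y'⟫_ℝ - ⟪x, y⟫_ℝ| ≤ 2 * δ := by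
    linarith [abs_real_inner_sub_inner_le (x' := x') (y := y) hx hy']
  calc ‖h' ⟪x', y'⟫_ℝ • y' - h' ⟪x, y⟫_ℝ • y‖
      ≤ |h' ⟪x', y'⟫_ℝ - h' ⟪x, y⟫_ℝ| * ‖y'‖ + |h' ⟪x, y⟫_ℝ| * ‖y' - y‖ :=
        norm_smul_sub_smul_le _ _ _ _
    _ ≤ K * (2 * δ) * 1 + K * δ := by
        rw [hy']
        gcongr
        · exact (hlip _ (real_inner_mem_Icc_of_norm_eq_one hx' hy') _ hmem).trans
            (mul_le_mul_of_nonneg_left hq hK)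
        · exact hbound _ hmem
    _ = 3 * K * δ := by ring

variable {ι : Type*} [Fintype ι]

lemma norm_sum_apply_inner_smul_sub_le
    (hbound : ∀ q ∈ Icc (-1 : ℝ) 1, |h' q| ≤ K)
    (hlip : ∀ q ∈ Icc (-1 : ℝ) 1, ∀ q' ∈ Icc (-1 : ℝ) 1, |h' q - h' q'| ≤ K * |q - q'|)
    (a : ι → ℝ) {w w' : ι → E} (hw : ∀ i, ‖w i‖ = 1) (hw' : ∀ i, ‖w' i‖ = 1)
    (hδ : ∀ i, ‖w' i - w i‖ ≤ δ) (ℓ : ι) :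
    ‖∑ j, (a j * h' ⟪w' ℓ, w' j⟫_ℝ) • w' j - ∑ j, (a j * h' ⟪w ℓ, w j⟫_ℝ) • w j‖
      ≤ 3 * K * δ * ∑ j, |a j| := by
  rw [← sum_sub_distrib, mul_sum]
  refine (norm_sum_le _ _).trans (sum_le_sum fun j _ => ?_)
  rw [mul_smul, mul_smul, ← smul_sub, norm_smul, Real.norm_eq_abs, mul_comm]
  gcongr
  exact norm_apply_inner_smul_sub_le hbound hlip (hw ℓ) (hw' ℓ) (hw j) (hw' j) (hδ ℓ) (hδ j)

-- `∇_{w_ℓ}R(a, W)` with `f` standing for `w ↦ U ∇φ̂(Uᵀ w)`.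
noncomputable def popGrad (f : E → E) (h' : ℝ → ℝ) (a : ι → ℝ) (w : ι → E) (ℓ : ι) : E :=
  (a ℓ / Fintype.card ι) •
    (-f (w ℓ) + (1 / (Fintype.card ι : ℝ)) • ∑ j, (a j * h' ⟪w ℓ, w j⟫_ℝ) • w j)

theorem norm_popGrad_sub_le {f : E → E} (hf : ∀ x x', ‖f x' - f x‖ ≤ K * ‖x' - x‖)
    (hbound : ∀ q ∈ Icc (-1 : ℝ) 1, |h' q| ≤ K)
    (hlip : ∀ q ∈ Icc (-1 : ℝ) 1, ∀ q' ∈ Icc (-1 : ℝ) 1, |h' q - h' q'| ≤ K * |q - q'|)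
    (a : ι → ℝ) {w w' : ι → E} (hw : ∀ i, ‖w i‖ = 1) (hw' : ∀ i, ‖w' i‖ = 1)
    (hδ : ∀ i, ‖w' i - w i‖ ≤ δ) (ℓ : ι) :
    ‖popGrad f h' a w' ℓ - popGrad f h' a w ℓ‖
      ≤ |a ℓ| / Fintype.card ι * (K * δ + 3 * K * δ * ((∑ j, |a j|) / Fintype.card ι)) := by
  set m : ℝ := ((Fintype.card ι : ℕ) : ℝ)
  have hK : 0 ≤ K := (abs_nonneg _).trans (hbound 0 ⟨by norm_num, by norm_num⟩)
  set S := ∑ j, (a j * h' ⟪w ℓ, w j⟫_ℝ) • w j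
  set S' := ∑ j, (a j * h' ⟪w' ℓ, w' j⟫_ℝ) • w' j
  have hdiff : popGrad f h' a w' ℓ - popGrad f h' a w ℓ
      = (a ℓ / m) • (-(f (w' ℓ) - f (w ℓ)) + (1 / m) • (S' - S)) := by
    simp only [popGrad, smul_sub]; module
  rw [hdiff, norm_smul, Real.norm_eq_abs, abs_div, Nat.abs_cast]
  gcongr
  calc ‖-(f (w' ℓ) - f (w ℓ)) + (1 / m) • (S' - S)‖
      ≤ ‖f (w' ℓ) - f (w ℓ)‖ + 1 / m * ‖S' - S‖ := by
        refine (norm_add_le _ _).trans ?_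
        rw [norm_neg, norm_smul, Real.norm_eq_abs, abs_of_nonneg (by positivity)]
    _ ≤ K * δ + 1 / m * (3 * K * δ * ∑ j, |a j|) := by
        gcongr
        · exact (hf _ _).trans (mul_le_mul_of_nonneg_left (hδ ℓ) hK)
        · exact norm_sum_apply_inner_smul_sub_le hbound hlip a hw hw' hδ ℓ
    _ = K * δ + 3 * K * δ * ((∑ j, |a j|) / m) := by ring

end InnerProductSpace

section Coordinates

variable {m n : Type*} [Fintype m] [Fintype n]

lemma sqrt_sum_sq_eq_norm_toLp (x : n → ℝ) : √(∑ i, x i ^ 2) = ‖WithLp.toLp 2 x‖ := by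
  simp [EuclideanSpace.norm_eq]

lemma sqrt_sum_sub_sq_eq_norm_sub (x y : n → ℝ) :
    √(∑ i, (x i - y i) ^ 2) = ‖WithLp.toLp 2 x - WithLp.toLp 2 y‖ := by
  rw [← WithLp.toLp_sub, ← sqrt_sum_sq_eq_norm_toLp, Pi.sub_def]

lemma norm_toLp_sq (x : n → ℝ) : ‖WithLp.toLp 2 x‖ ^ 2 = x ⬝ᵥ x := by
  rw [← real_inner_self_eq_norm_sq, EuclideanSpace.inner_toLp_toLp, star_trivial]

variable [DecidableEq n] {M : Matrix m n ℝ}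

lemma norm_toLp_mulVec_of_transpose_mul_self (hM : Mᵀ * M = 1) (v : n → ℝ) :
    ‖WithLp.toLp 2 (M *ᵥ v)‖ = ‖WithLp.toLp 2 v‖ := by
  rw [← sq_eq_sq₀ (norm_nonneg _) (norm_nonneg _), norm_toLp_sq, norm_toLp_sq, dotProduct_mulVec,
    ← mulVec_transpose, mulVec_mulVec, hM, one_mulVec]

lemma norm_toLp_transpose_mulVec_le (hM : Mᵀ * M = 1) (x : m → ℝ) :
    ‖WithLp.toLp 2 (Mᵀ *ᵥ x)‖ ≤ ‖WithLp.toLp 2 x‖ := by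
  set y := Mᵀ *ᵥ x
  have hy : ‖WithLp.toLp 2 y‖ ^ 2 ≤ ‖WithLp.toLp 2 x‖ * ‖WithLp.toLp 2 y‖ :=
    calc ‖WithLp.toLp 2 y‖ ^ 2 = ⟪WithLp.toLp 2 x, WithLp.toLp 2 (M *ᵥ y)⟫_ℝ := by
          rw [norm_toLp_sq, EuclideanSpace.inner_toLp_toLp, star_trivial, dotProduct_comm,
            dotProduct_mulVec, ← mulVec_transpose, transpose_transpose]
      _ ≤ ‖WithLp.toLp 2 x‖ * ‖WithLp.toLp 2 y‖ := by
          rw [← norm_toLp_mulVec_of_transpose_mul_self hM y]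
          exact real_inner_le_norm _ _
  rcases (norm_nonneg (WithLp.toLp 2 y)).eq_or_lt with h0 | hpos
  · exact h0 ▸ norm_nonneg _
  · exact le_of_mul_le_mul_right (by rwa [sq] at hy) hpos

lemma norm_toLp_mulVec_comp_sub_le (hM : Mᵀ * M = 1) {g : (n → ℝ) → n → ℝ} {K : ℝ} (hK : 0 ≤ K)
    (hg : ∀ z z', ‖WithLp.toLp 2 (g z) - WithLp.toLp 2 (g z')‖
      ≤ K * ‖WithLp.toLp 2 z - WithLp.toLp 2 z'‖)
    (x x' : EuclideanSpace ℝ m) :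
    ‖WithLp.toLp 2 (M *ᵥ g (Mᵀ *ᵥ x'.ofLp)) - WithLp.toLp 2 (M *ᵥ g (Mᵀ *ᵥ x.ofLp))‖
      ≤ K * ‖x' - x‖ :=
  calc _ = ‖WithLp.toLp 2 (g (Mᵀ *ᵥ x'.ofLp)) - WithLp.toLp 2 (g (Mᵀ *ᵥ x.ofLp))‖ := by
        rw [← WithLp.toLp_sub, ← mulVec_sub, norm_toLp_mulVec_of_transpose_mul_self hM,
          WithLp.toLp_sub]
    _ ≤ K * ‖WithLp.toLp 2 (Mᵀ *ᵥ x'.ofLp) - WithLp.toLp 2 (Mᵀ *ᵥ x.ofLp)‖ := hg _ _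
    _ ≤ K * ‖x' - x‖ := by
        rw [← WithLp.toLp_sub, ← mulVec_sub]
        exact mul_le_mul_of_nonneg_left (norm_toLp_transpose_mulVec_le hM _) hK

end Coordinates

lemma toLp_gradPopW (d m k : ℕ) (h' : ℝ → ℝ) (gφh : (Fin k → ℝ) → Fin k → ℝ)
    (U : Fin d → Fin k → ℝ) (a : Fin m → ℝ) (W : Fin m → Fin d → ℝ) (ℓ : Fin m) :
    WithLp.toLp 2 (gradPopW d m k h' gφh U a W ℓ)
      = popGrad (fun x => WithLp.toLp 2 (Matrix.of U *ᵥ gφh ((Matrix.of U)ᵀ *ᵥ x.ofLp))) h' a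
          (fun i => WithLp.toLp 2 (W i)) ℓ := by
  have hUt : (of U)ᵀ *ᵥ W ℓ = fun j' => ∑ kk', U kk' j' * W ℓ kk' := rfl
  ext kk
  simp only [gradPopW, popGrad, one_div, Fintype.card_fin, hUt, EuclideanSpace.inner_toLp_toLp,
    dotProduct, Pi.star_apply, star_trivial, mul_comm (W _ _) (W ℓ _), smul_add, smul_neg,
    PiLp.add_apply, PiLp.neg_apply, PiLp.smul_apply, mulVec, of_apply, smul_eq_mul,
    WithLp.ofLp_sum, WithLp.ofLp_smul, Finset.sum_apply, Pi.smul_apply]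
  ring

/-- Lipschitz continuity of population gradients in `W`: if
`‖h'‖_∞, ‖h'‖_Lip ≤ C L²` and `‖∇φ̂‖_∞, ‖∇φ̂‖_Lip ≤ C L²`, then for `(a,W), (a,Wt)` with
`‖a‖₁/m ≤ ā` and unit-norm rows,
`‖∇_{w_ℓ}R(a,Wt) - ∇_{w_ℓ}R(a,W)‖ ≤ C' L² (|a_ℓ|/m)(1 + ā) maxⱼ ‖w̃ⱼ - wⱼ‖`. -/
theorem stmt_14 (C : ℝ) (hC : 0 ≤ C) :
    ∃ C' : ℝ, 0 < C' ∧
    ∀ (d m k : ℕ), 0 < m →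
    ∀ (L abar : ℝ), 0 ≤ L → 0 ≤ abar →
    ∀ (h' : ℝ → ℝ) (gφh : (Fin k → ℝ) → Fin k → ℝ) (U : Fin d → Fin k → ℝ),
      (∀ q ∈ Set.Icc (-1 : ℝ) 1, |h' q| ≤ C * L ^ 2) →
      (∀ q ∈ Set.Icc (-1 : ℝ) 1, ∀ q' ∈ Set.Icc (-1 : ℝ) 1,
        |h' q - h' q'| ≤ C * L ^ 2 * |q - q'|) →
      (∀ z : Fin k → ℝ, Real.sqrt (∑ j, (gφh z j) ^ 2) ≤ C * L ^ 2) →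
      (∀ z z' : Fin k → ℝ,
        Real.sqrt (∑ j, (gφh z j - gφh z' j) ^ 2)
          ≤ C * L ^ 2 * Real.sqrt (∑ j, (z j - z' j) ^ 2)) →
      (∀ j j', ∑ i, U i j * U i j' = if j = j' then (1 : ℝ) else 0) →
    ∀ (a : Fin m → ℝ) (W Wt : Fin m → Fin d → ℝ),
      (∑ i, |a i|) / m ≤ abar →
      (∀ i, ∑ kk, (W i kk) ^ 2 = 1) → (∀ i, ∑ kk, (Wt i kk) ^ 2 = 1) →
    ∀ ℓ : Fin m, ∀ δ : ℝ, 0 ≤ δ →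
      (∀ j, Real.sqrt (∑ kk, (Wt j kk - W j kk) ^ 2) ≤ δ) →
      Real.sqrt (∑ kk, (gradPopW d m k h' gφh U a Wt ℓ kk
            - gradPopW d m k h' gφh U a W ℓ kk) ^ 2)
        ≤ C' * L ^ 2 * (|a ℓ| / m) * (1 + abar) * δ := by
  refine ⟨3 * C + 1, by positivity, ?_⟩
  intro d m k _ L abar _ habar h' gφh U hbound hlip _ glip hU a W Wt ha hW hWt ℓ δ hδ hdist
  have hM : (of U)ᵀ * of U = 1 := by
    ext j j'
    simp [mul_apply, one_apply, hU]
  have hunit : ∀ V : Fin m → Fin d → ℝ, (∀ i, ∑ kk, V i kk ^ 2 = 1) →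
      ∀ i, ‖WithLp.toLp 2 (V i)‖ = 1 :=
    fun V hV i => by rw [← sqrt_sum_sq_eq_norm_toLp, hV i, Real.sqrt_one]
  have hf := norm_toLp_mulVec_comp_sub_le hM (g := gφh) (K := C * L ^ 2) (by positivity)
    fun z z' => by simpa only [sqrt_sum_sub_sq_eq_norm_sub] using glip z z'
  have key := norm_popGrad_sub_le hf hbound hlip a (hunit W hW) (hunit Wt hWt)
    (fun j => by simpa only [sqrt_sum_sub_sq_eq_norm_sub] using hdist j) ℓ
  rw [sqrt_sum_sub_sq_eq_norm_sub, toLp_gradPopW, toLp_gradPopW]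
  refine key.trans ?_
  rw [Fintype.card_fin]
  have hℓ : 0 ≤ |a ℓ| / m := by positivity
  calc |a ℓ| / m * (C * L ^ 2 * δ + 3 * (C * L ^ 2) * δ * ((∑ j, |a j|) / m))
      ≤ |a ℓ| / m * (C * L ^ 2 * δ + 3 * (C * L ^ 2) * δ * abar) := by gcongr
    _ ≤ (3 * C + 1) * L ^ 2 * (|a ℓ| / m) * (1 + abar) * δ := by
      nlinarith [mul_nonneg (mul_nonneg (mul_nonneg hℓ hδ) (sq_nonneg L))
        (by positivity : 0 ≤ 2 * C + 1 + abar)]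
end
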